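/- CR3 for STLC reducibility: for every simple type A and neutral term M (M is a variable or an application, i.e., not a λ-abstraction), if every one-step β-reduct N of M satisfies Reducible A N, then Reducible A M. -/
import Mathlib


namespace Metatheory

inductive Term where
  | var : Nat → Term
  | app : Term → Term → Term
  | lam : Term → Term

def shift (d c : Nat) : Term → Term
  | .var n => .var (if n < c then n else n + d)
  | .app M N => .app (shift d c M) (shift d c N)
  | .lam M => .lam (shift d (c + 1) M)

def subst (k : Nat) (N : Term) : Term → Term
  | .var n => if n < k then .var n else if n = k then shift k 0 N else .var (n - 1)
  | .app M₁ M₂ => .app (subst k N M₁) (subst k N M₂)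
  | .lam M => .lam (subst (k + 1) (shift 1 0 N) M)

inductive Beta : Term → Term → Prop where
  | beta {M N : Term} : Beta (.app (.lam M) N) (subst 0 N M)
  | appL {M M' N : Term} : Beta M M' → Beta (.app M N) (.app M' N)
  | appR {M N N' : Term} : Beta N N' → Beta (.app M N) (.app M N')
  | lam {M M' : Term} : Beta M M' → Beta (.lam M) (.lam M')

inductive Ty where
  | base : Nat → Ty
  | arr : Ty → Ty → Ty

inductive Typing : List Ty → Term → Ty → Prop where
  | var {Γ : List Ty} {n : Nat} {A : Ty} :
      Γ[n]? = some A → Typing Γ (.var n) A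
  | lam {Γ : List Ty} {M : Term} {A B : Ty} :
      Typing (A :: Γ) M B → Typing Γ (.lam M) (.arr A B)
  | app {Γ : List Ty} {M N : Term} {A B : Ty} :
      Typing Γ M (.arr A B) → Typing Γ N A → Typing Γ (.app M N) B

def SN (M : Term) : Prop := Acc (fun N M => Beta M N) M

def Reducible : Ty → Term → Prop
  | .base _, M => SN M
  | .arr A B, M => ∀ N, Reducible A N → Reducible B (.app M N)

def Neutral : Term → Prop
  | .var _ => True
  | .app _ _ => True
  | .lam _ => False


lemma cr2 : ∀ (A : Ty) (M N : Term), Reducible A M → Beta M N → Reducible A N := by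
  intro A
  induction A with
  | base n =>
    intro M N hM hMN
    exact hM.inv hMN
  | arr A B ihA ihB =>
    intro M N hM hMN P hP
    exact ihB _ _ (hM P hP) (Beta.appL hMN)

lemma var_no_beta {n : Nat} {N : Term} : ¬ Beta (.var n) N := by
  intro h; cases h

lemma sn_app_left {M N : Term} (h : SN (.app M N)) : SN M := by
  generalize hE : Term.app M N = E at h
  induction h generalizing M N with
  | intro E _ ih =>
    subst hE
    constructor
    intro M' hM'
    exact ih _ (Beta.appL hM') rfl

lemma cr13 : ∀ (A : Ty),
    (∀ M, Reducible A M → SN M) ∧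
    (∀ M, Neutral M → (∀ N, Beta M N → Reducible A N) → Reducible A M) := by
  intro A
  induction A with
  | base n =>
    refine ⟨fun M h => h, fun M _ h => ?_⟩
    exact ⟨M, h⟩
  | arr A B ihA ihB =>
    constructor
    · intro M hM
      have hv : Reducible A (.var 0) :=
        ihA.2 _ trivial (fun N hN => absurd hN var_no_beta)
      exact sn_app_left (ihB.1 _ (hM _ hv))
    · intro M hMneut h N hN
      have hSN : SN N := ihA.1 _ hN
      induction hSN with
      | intro N _ ihN =>
        refine ihB.2 _ trivial ?_
        intro P hP
        cases hP with
        | beta => exact absurd hMneut (by simp [Neutral])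
        | appL hM' => exact h _ hM' _ hN
        | appR hN' => exact ihN _ hN' (cr2 _ _ _ hN hN')

theorem cr3 (A : Ty) (M : Term) (hneut : Neutral M)
    (h : ∀ N, Beta M N → Reducible A N) : Reducible A M := by
  exact (cr13 A).2 M hneut h

end Metatheory
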